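/- arXiv:0709.0240 — 4 statements merged into one kernel-verified Lean document; each statement's English description precedes it below -/
import Mathlib

section
/- Let f(x) = x² - x - 3, ρ(x) = x/(2x - 1) and h(x) = 3 - x. For every real x > -13/4, if y₁ and y₂ are the two real solutions of f(y) = x, then ρ(y₁)h(y₁) + ρ(y₂)h(y₂) = 2. -/
/-! Two distinct preimages of `x` under `y ↦ y² - y - 3` satisfy `y₂ = 1 - y₁`. The substitution
`y ↦ 1 - y` changes the sign of `2y - 1`, so the sum becomes
`(y₁(3 - y₁) - (1 - y₁)(2 + y₁)) / (2y₁ - 1) = (4y₁ - 2) / (2y₁ - 1) = 2`. -/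

theorem add_eq_one_of_sq_sub_self_eq {R : Type*} [CommRing R] [NoZeroDivisors R] {a b : R}
    (hab : a ≠ b) (h : a ^ 2 - a = b ^ 2 - b) : a + b = 1 := by
  have hfactor : (a - b) * (a + b - 1) = 0 := by linear_combination h
  exact sub_eq_zero.mp <| (mul_eq_zero.mp hfactor).resolve_left (sub_ne_zero.mpr hab)

theorem rho_h_add_rho_h_one_sub_eq_two {K : Type*} [Field K] {y : K} (hy : 2 * y - 1 ≠ 0) :
    y / (2 * y - 1) * (3 - y) + (1 - y) / (2 * (1 - y) - 1) * (3 - (1 - y)) = 2 := by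
  rw [show 2 * (1 - y) - 1 = -(2 * y - 1) by ring, div_mul_eq_mul_div, div_mul_eq_mul_div, div_neg,
    ← sub_eq_add_neg, div_sub_div_same, div_eq_iff hy]
  ring

theorem rho_h_sum_eq_two_general (x y₁ y₂ : ℝ)
    (h1 : y₁ ^ 2 - y₁ - 3 = x) (h2 : y₂ ^ 2 - y₂ - 3 = x) (hne : y₁ ≠ y₂) :
    (y₁ / (2 * y₁ - 1)) * (3 - y₁) + (y₂ / (2 * y₂ - 1)) * (3 - y₂) = 2 := by
  have hsum : y₁ + y₂ = 1 := add_eq_one_of_sq_sub_self_eq hne (by linear_combination h1 - h2)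
  obtain rfl : y₂ = 1 - y₁ := by linear_combination hsum
  have hy₁ : 2 * y₁ - 1 ≠ 0 := by
    rw [show 2 * y₁ - 1 = y₁ - (1 - y₁) by ring]
    exact sub_ne_zero.mpr hne
  exact rho_h_add_rho_h_one_sub_eq_two hy₁

/-- For `f y = y^2 - y - 3`, `ρ y = y / (2y - 1)`, `h y = 3 - y`: if `x > -13/4`
and `y₁, y₂` are the two real solutions of `f y = x`, then
`ρ y₁ * h y₁ + ρ y₂ * h y₂ = 2`. -/
theorem rho_h_sum_eq_two (x y₁ y₂ : ℝ)
    (hx : -13/4 < x)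
    (h1 : y₁ ^ 2 - y₁ - 3 = x) (h2 : y₂ ^ 2 - y₂ - 3 = x) (hne : y₁ ≠ y₂) :
    (y₁ / (2 * y₁ - 1)) * (3 - y₁) + (y₂ / (2 * y₂ - 1)) * (3 - y₂) = 2 :=
  rho_h_sum_eq_two_general x y₁ y₂ h1 h2 hne
end

section
/- Let f(x) = x² - x - 3 and σ(x) = 1/(x(2x - 1)). For every real x > -13/4 with x ≠ -3, if y₁ and y₂ are the two real solutions of f(y) = x and neither equals 0 nor 1/2, then σ(y₁) + σ(y₂) = 1/(x + 3). -/
/-!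
If `y₁ ≠ y₂` both solve `y² - y - 3 = x`, Vieta gives `y₁ + y₂ = 1` and `y₁ y₂ = -(x + 3)`.
The sum condition turns `2yᵢ - 1` into `±(y₁ - y₂)`, and then
`1/(y₁(y₁ - y₂)) + 1/(y₂(y₂ - y₁)) = -1/(y₁ y₂) = 1/(x + 3)`.
-/

theorem vieta_of_ne {R : Type*} [CommRing R] [NoZeroDivisors R] {b c y₁ y₂ : R}
    (h₁ : y₁ ^ 2 + b * y₁ + c = 0) (h₂ : y₂ ^ 2 + b * y₂ + c = 0) (hne : y₁ ≠ y₂) :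
    y₁ + y₂ = -b ∧ y₁ * y₂ = c := by
  have hfactor : (y₁ - y₂) * (y₁ + y₂ + b) = 0 := by linear_combination h₁ - h₂
  have hsum : y₁ + y₂ = -b := by
    have := (mul_eq_zero.1 hfactor).resolve_left (sub_ne_zero.2 hne)
    linear_combination this
  exact ⟨hsum, by linear_combination -h₁ + y₁ * hsum⟩

theorem one_div_mul_sub_add_one_div_mul_sub {K : Type*} [Field K] {a b : K}
    (ha : a ≠ 0) (hb : b ≠ 0) (hab : a ≠ b) :
    1 / (a * (a - b)) + 1 / (b * (b - a)) = -1 / (a * b) := by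
  have hab' : a - b ≠ 0 := sub_ne_zero.2 hab
  have hba' : b - a ≠ 0 := sub_ne_zero.2 hab.symm
  field_simp
  ring

theorem sigma_sum_general (x y₁ y₂ : ℝ)
    (h1 : y₁ ^ 2 - y₁ - 3 = x) (h2 : y₂ ^ 2 - y₂ - 3 = x) (hne : y₁ ≠ y₂)
    (hy10 : y₁ ≠ 0) (hy20 : y₂ ≠ 0) :
    1 / (y₁ * (2 * y₁ - 1)) + 1 / (y₂ * (2 * y₂ - 1)) = 1 / (x + 3) := by
  obtain ⟨hsum, hprod⟩ := vieta_of_ne (b := -1) (c := -(x + 3))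
    (by linear_combination h1) (by linear_combination h2) hne
  have h2y₁ : 2 * y₁ - 1 = y₁ - y₂ := by linear_combination hsum
  have h2y₂ : 2 * y₂ - 1 = y₂ - y₁ := by linear_combination hsum
  rw [h2y₁, h2y₂, one_div_mul_sub_add_one_div_mul_sub hy10 hy20 hne, hprod, neg_div_neg_eq]

/-- For `f y = y^2 - y - 3` and `σ y = 1 / (y(2y - 1))`: if `x > -13/4`, `x ≠ -3`,
and `y₁, y₂` are the two real solutions of `f y = x`, none of which equals `0` or `1/2`,
then `σ y₁ + σ y₂ = 1 / (x + 3)`. -/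
theorem sigma_sum (x y₁ y₂ : ℝ)
    (hx : -13/4 < x) (hx3 : x ≠ -3)
    (h1 : y₁ ^ 2 - y₁ - 3 = x) (h2 : y₂ ^ 2 - y₂ - 3 = x) (hne : y₁ ≠ y₂)
    (hy10 : y₁ ≠ 0) (hy1h : y₁ ≠ 1/2) (hy20 : y₂ ≠ 0) (hy2h : y₂ ≠ 1/2) :
    1 / (y₁ * (2 * y₁ - 1)) + 1 / (y₂ * (2 * y₂ - 1)) = 1 / (x + 3) :=
  sigma_sum_general x y₁ y₂ h1 h2 hne hy10 hy20
end

section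
/- Let X be a compact metric space and P a positive bounded operator on C⁰(X) of operator norm at most 1. For every complex Borel measure λ on X, the total variation measures satisfy |P*λ| ≤ P*|λ|. In particular, if P*λ = λ then P*|λ| = |λ|. -/
/-!
For `0 ≤ g`, `μ.variation g = sup_{‖h‖ ≤ 1} ‖μ (g * h)‖` is `∫ g d|μ|`. Two facts drive the
proof. A positive functional `φ` satisfies `‖φ (g * h)‖ ≤ φ g` for `0 ≤ g` and `|h| ≤ 1`: rotate
`h` so that `φ (g * h) ≥ 0`, then compare `g * Re h ≤ g` and `g * Im h ≤ g`; the second forces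
`φ (g * Im h)` to be real. And every `k` with `|k| ≤ |G|` is a uniform limit of products `G * h`
with `‖h‖ ≤ 1`, so `‖μ k‖ ≤ μ.variation G`. Applied to `φ = δ_y ∘ P` they give
`|P (g * h)| ≤ P g` pointwise, hence `|P*μ| ≤ P*|μ|`.

If `μ ∘ P = μ`, use this for `g` and for `c - g` with `c = ‖g‖`: the variation is additive on
nonnegative functions and `μ.variation (P c) ≤ μ.variation c` since `‖P‖ ≤ 1`, so
`μ.variation (P g) ≤ μ.variation (P c) - μ.variation (c - g) ≤ μ.variation g`.
-/

open scoped ComplexOrder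

section

variable {X Y : Type*} [TopologicalSpace X] [TopologicalSpace Y]

theorem ContinuousMap.nonneg_iff_forall_re_im {g : C(X, ℂ)} :
    0 ≤ g ↔ ∀ x, 0 ≤ (g x).re ∧ (g x).im = 0 := by
  simp only [ContinuousMap.le_def, ContinuousMap.zero_apply, Complex.nonneg_iff, eq_comm]

theorem Complex.norm_add_of_nonneg {a b : ℂ} (ha : 0 ≤ a) (hb : 0 ≤ b) :
    ‖a + b‖ = ‖a‖ + ‖b‖ := by
  rw [← Complex.re_eq_norm.2 ha, ← Complex.re_eq_norm.2 hb,
    ← Complex.re_eq_norm.2 (add_nonneg ha hb), Complex.add_re]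

theorem PositiveLinearMap.norm_apply_mul_le (φ : C(X, ℂ) →ₚ[ℂ] ℂ) {g h : C(X, ℂ)}
    (hg : 0 ≤ g) (hh : ∀ x, ‖h x‖ ≤ 1) : ‖φ (g * h)‖ ≤ ‖φ g‖ := by
  obtain ⟨u, hu, hφu⟩ := Complex.exists_norm_eq_mul_self (φ (g * h))
  let h' := u • h
  let r : C(X, ℂ) := ⟨fun x => ((h' x).re : ℂ), by fun_prop⟩
  let s : C(X, ℂ) := ⟨fun x => ((h' x).im : ℂ), by fun_prop⟩
  have hh' : ∀ x, ‖h' x‖ ≤ 1 := fun x => by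
    simpa [h', norm_smul, hu] using hh x
  have hdecomp : u • (g * h) = g * r + Complex.I • (g * s) := by
    ext x
    simp only [ContinuousMap.smul_apply, ContinuousMap.mul_apply, ContinuousMap.add_apply,
      smul_eq_mul, r, s, ContinuousMap.coe_mk, h']
    rw [mul_left_comm]
    conv_lhs => rw [← Complex.re_add_im (u * h x)]
    ring
  have mul_le_self : ∀ f : C(X, ℂ), f ≤ 1 → g * f ≤ g := fun f hf x =>
    mul_le_of_le_one_right (hg x) (hf x)
  have hr : φ (g * r) ≤ φ g := OrderHomClass.mono φ <| mul_le_self r fun x => by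
    show ((h' x).re : ℂ) ≤ (1 : ℝ)
    exact_mod_cast (Complex.re_le_norm _).trans (hh' x)
  have hs : φ (g * s) ≤ φ g := OrderHomClass.mono φ <| mul_le_self s fun x => by
    show ((h' x).im : ℂ) ≤ (1 : ℝ)
    exact_mod_cast (Complex.im_le_norm _).trans (hh' x)
  have hφg : 0 ≤ φ g := φ.map_nonneg hg
  have hnorm : (‖φ (g * h)‖ : ℂ) = φ (g * r) + Complex.I * φ (g * s) := by
    rw [hφu, ← smul_eq_mul, ← map_smul, hdecomp, map_add, map_smul, smul_eq_mul]
  calc ‖φ (g * h)‖ = (φ (g * r)).re - (φ (g * s)).im := by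
        simpa [sub_eq_add_neg] using congrArg Complex.re hnorm
    _ = (φ (g * r)).re := by
        rw [(Complex.le_def.1 hs).2, ← (Complex.nonneg_iff.1 hφg).2, sub_zero]
    _ ≤ (φ g).re := (Complex.le_def.1 hr).1
    _ = ‖φ g‖ := Complex.re_eq_norm.2 hφg

variable [CompactSpace X] [CompactSpace Y]

theorem ContinuousMap.mem_closure_mul_image_closedBall {k G : C(X, ℂ)}
    (hk : ∀ x, ‖k x‖ ≤ ‖G x‖) : k ∈ closure ((G * ·) '' Metric.closedBall 0 1) := by
  refine Metric.mem_closure_iff.2 fun ε hε => ?_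
  set δ := (ε / 2) ^ 2
  have hδ : 0 < δ := by positivity
  set m : X → ℝ := fun x => max (‖G x‖ ^ 2) δ
  have hm : ∀ x, 0 < m x := fun x => lt_max_of_lt_right hδ
  -- a regularized `k / G`, cut off where `‖G x‖ < ε / 2`
  let h : C(X, ℂ) := ⟨fun x => k x * star (G x) * ((m x)⁻¹ : ℝ), by
    fun_prop (disch := exact fun x => (hm x).ne')⟩
  have hGh : ∀ x, k x - G x * h x = k x * ((1 - ‖G x‖ ^ 2 / m x : ℝ) : ℂ) := by
    intro x
    have hGG : G x * star (G x) = ((‖G x‖ ^ 2 : ℝ) : ℂ) := by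
      rw [Complex.star_def, Complex.mul_conj']; push_cast; rfl
    simp only [h, ContinuousMap.coe_mk]
    rw [Complex.ofReal_sub, Complex.ofReal_one, Complex.ofReal_div, Complex.ofReal_inv, ← hGG]
    have : (m x : ℂ) ≠ 0 := Complex.ofReal_ne_zero.2 (hm x).ne'
    field_simp
  refine ⟨G * h, ⟨h, mem_closedBall_zero_iff.2 ?_, rfl⟩, ?_⟩
  · refine (ContinuousMap.norm_le _ zero_le_one).2 fun x => ?_
    simp only [h, ContinuousMap.coe_mk, norm_mul, norm_star, Complex.norm_real, Real.norm_eq_abs,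
      abs_inv, abs_of_pos (hm x)]
    rw [← div_eq_mul_inv, div_le_one (hm x)]
    calc ‖k x‖ * ‖G x‖ ≤ ‖G x‖ ^ 2 := by rw [sq]; gcongr; exact hk x
      _ ≤ m x := le_max_left _ _
  · rw [dist_eq_norm]
    refine lt_of_le_of_lt ((ContinuousMap.norm_le _ (by positivity)).2 fun x => ?_)
      (half_lt_self hε)
    rw [ContinuousMap.sub_apply, ContinuousMap.mul_apply, hGh, norm_mul, Complex.norm_real,
      Real.norm_eq_abs]
    rcases le_total δ (‖G x‖ ^ 2) with hGδ | hGδ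
    · have hmx : m x = ‖G x‖ ^ 2 := max_eq_left hGδ
      rw [hmx, div_self (hδ.trans_le hGδ).ne']
      simp only [sub_self, mul_zero, abs_zero]
      positivity
    · have hG : ‖G x‖ ≤ ε / 2 :=
        (pow_le_pow_iff_left₀ (norm_nonneg _) (by positivity) two_ne_zero).1 hGδ
      have hfac : 0 ≤ 1 - ‖G x‖ ^ 2 / m x :=
        sub_nonneg.2 ((div_le_one (hm x)).2 (le_max_left _ _))
      rw [abs_of_nonneg hfac]
      calc ‖k x‖ * (1 - ‖G x‖ ^ 2 / m x) ≤ ‖k x‖ * 1 := by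
            gcongr; exact sub_le_self _ (by positivity)
        _ ≤ ε / 2 := by rw [mul_one]; exact (hk x).trans hG

theorem ContinuousMap.norm_mul_apply_le {g h : C(X, ℂ)} (hh : ‖h‖ ≤ 1) (x : X) :
    ‖(g * h) x‖ ≤ ‖g x‖ := by
  rw [ContinuousMap.mul_apply, norm_mul]
  exact mul_le_of_le_one_right (norm_nonneg _) ((h.norm_coe_le_norm x).trans hh)

namespace ContinuousLinearMap

def variationSet (μ : C(X, ℂ) →L[ℂ] ℂ) (g : C(X, ℂ)) : Set ℝ :=
  {r | ∃ h : C(X, ℂ), ‖h‖ ≤ 1 ∧ r = ‖μ (g * h)‖}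

noncomputable def variation (μ : C(X, ℂ) →L[ℂ] ℂ) (g : C(X, ℂ)) : ℝ :=
  sSup (μ.variationSet g)

variable (μ : C(X, ℂ) →L[ℂ] ℂ)

theorem variationSet_nonempty (g : C(X, ℂ)) : (μ.variationSet g).Nonempty :=
  ⟨_, 0, by simp, rfl⟩

theorem bddAbove_variationSet (g : C(X, ℂ)) : BddAbove (μ.variationSet g) := by
  refine ⟨‖μ‖ * ‖g‖, ?_⟩
  rintro _ ⟨h, hh, rfl⟩
  calc ‖μ (g * h)‖ ≤ ‖μ‖ * ‖g * h‖ := μ.le_opNorm _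
    _ ≤ ‖μ‖ * (‖g‖ * ‖h‖) := by gcongr; exact norm_mul_le g h
    _ ≤ ‖μ‖ * ‖g‖ := by
      rw [← mul_assoc]; exact mul_le_of_le_one_right (by positivity) hh

theorem isLUB_variation (g : C(X, ℂ)) : IsLUB (μ.variationSet g) (μ.variation g) :=
  isLUB_csSup (μ.variationSet_nonempty g) (μ.bddAbove_variationSet g)

theorem norm_apply_mul_le_variation {g h : C(X, ℂ)} (hh : ‖h‖ ≤ 1) :
    ‖μ (g * h)‖ ≤ μ.variation g :=
  (μ.isLUB_variation g).1 ⟨h, hh, rfl⟩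

theorem norm_apply_le_variation {k G : C(X, ℂ)} (hk : ∀ x, ‖k x‖ ≤ ‖G x‖) :
    ‖μ k‖ ≤ μ.variation G := by
  have hsub : (G * ·) '' Metric.closedBall 0 1 ⊆ {f | ‖μ f‖ ≤ μ.variation G} := by
    rintro _ ⟨h, hh, rfl⟩
    exact μ.norm_apply_mul_le_variation (mem_closedBall_zero_iff.1 hh)
  exact closure_minimal hsub (isClosed_le (by fun_prop) continuous_const)
    (ContinuousMap.mem_closure_mul_image_closedBall hk)

theorem variation_mono {g₁ g₂ : C(X, ℂ)} (hg : ∀ x, ‖g₁ x‖ ≤ ‖g₂ x‖) :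
    μ.variation g₁ ≤ μ.variation g₂ := by
  refine (μ.isLUB_variation g₁).2 ?_
  rintro _ ⟨h, hh, rfl⟩
  exact μ.norm_apply_le_variation fun x => (ContinuousMap.norm_mul_apply_le hh x).trans (hg x)

theorem variation_add_le (g₁ g₂ : C(X, ℂ)) :
    μ.variation (g₁ + g₂) ≤ μ.variation g₁ + μ.variation g₂ := by
  refine (μ.isLUB_variation _).2 ?_
  rintro _ ⟨h, hh, rfl⟩
  rw [add_mul, map_add]
  exact (norm_add_le _ _).trans
    (add_le_add (μ.norm_apply_mul_le_variation hh) (μ.norm_apply_mul_le_variation hh))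

theorem exists_apply_mul_eq_norm (g h : C(X, ℂ)) (hh : ‖h‖ ≤ 1) :
    ∃ h' : C(X, ℂ), ‖h'‖ ≤ 1 ∧ μ (g * h') = ‖μ (g * h)‖ := by
  obtain ⟨u, hu, hμu⟩ := Complex.exists_norm_eq_mul_self (μ (g * h))
  refine ⟨u • h, by rwa [norm_smul, hu, one_mul], ?_⟩
  rw [mul_smul_comm, map_smul, smul_eq_mul, hμu]

theorem le_variation_add {g₁ g₂ : C(X, ℂ)} (hg₁ : 0 ≤ g₁) (hg₂ : 0 ≤ g₂) :
    μ.variation g₁ + μ.variation g₂ ≤ μ.variation (g₁ + g₂) := by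
  have key : ∀ h₁ h₂ : C(X, ℂ), ‖h₁‖ ≤ 1 → ‖h₂‖ ≤ 1 →
      ‖μ (g₁ * h₁)‖ + ‖μ (g₂ * h₂)‖ ≤ μ.variation (g₁ + g₂) := by
    intro h₁ h₂ hh₁ hh₂
    obtain ⟨h₁', hh₁', hμ₁⟩ := μ.exists_apply_mul_eq_norm g₁ h₁ hh₁
    obtain ⟨h₂', hh₂', hμ₂⟩ := μ.exists_apply_mul_eq_norm g₂ h₂ hh₂
    have hsum : μ (g₁ * h₁' + g₂ * h₂') = ((‖μ (g₁ * h₁)‖ + ‖μ (g₂ * h₂)‖ : ℝ) : ℂ) := by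
      rw [map_add, hμ₁, hμ₂, Complex.ofReal_add]
    calc ‖μ (g₁ * h₁)‖ + ‖μ (g₂ * h₂)‖ = ‖μ (g₁ * h₁' + g₂ * h₂')‖ := by
          rw [hsum, Complex.norm_of_nonneg (by positivity)]
      _ ≤ μ.variation (g₁ + g₂) := μ.norm_apply_le_variation fun x =>
        calc ‖(g₁ * h₁' + g₂ * h₂') x‖ ≤ ‖g₁ x‖ + ‖g₂ x‖ := (norm_add_le _ _).trans
              (add_le_add (ContinuousMap.norm_mul_apply_le hh₁' x)
                (ContinuousMap.norm_mul_apply_le hh₂' x))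
          _ = ‖(g₁ + g₂) x‖ := (Complex.norm_add_of_nonneg (hg₁ x) (hg₂ x)).symm
  rw [variation, variation, ← csSup_add (μ.variationSet_nonempty g₁) (μ.bddAbove_variationSet g₁)
    (μ.variationSet_nonempty g₂) (μ.bddAbove_variationSet g₂)]
  refine csSup_le ((μ.variationSet_nonempty g₁).add (μ.variationSet_nonempty g₂)) ?_
  rintro _ ⟨_, ⟨h₁, hh₁, rfl⟩, _, ⟨h₂, hh₂, rfl⟩, rfl⟩
  exact key h₁ h₂ hh₁ hh₂

theorem variation_add {g₁ g₂ : C(X, ℂ)} (hg₁ : 0 ≤ g₁) (hg₂ : 0 ≤ g₂) :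
    μ.variation (g₁ + g₂) = μ.variation g₁ + μ.variation g₂ :=
  (μ.variation_add_le g₁ g₂).antisymm (μ.le_variation_add hg₁ hg₂)

theorem variation_comp_le (μ : C(Y, ℂ) →L[ℂ] ℂ) (P : C(X, ℂ) →L[ℂ] C(Y, ℂ))
    (hP : ∀ f, 0 ≤ f → 0 ≤ P f) {g : C(X, ℂ)} (hg : 0 ≤ g) :
    (μ.comp P).variation g ≤ μ.variation (P g) := by
  refine ((μ.comp P).isLUB_variation g).2 ?_
  rintro _ ⟨h, hh, rfl⟩
  refine μ.norm_apply_le_variation fun y => ?_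
  let φ : C(X, ℂ) →ₚ[ℂ] ℂ :=
    .mk₀ ((ContinuousMap.evalCLM ℂ y).toLinearMap ∘ₗ P.toLinearMap) fun f hf => hP f hf y
  exact φ.norm_apply_mul_le hg fun x => (h.norm_coe_le_norm x).trans hh

theorem variation_apply_eq_of_comp_eq (P : C(X, ℂ) →L[ℂ] C(X, ℂ))
    (hP : ∀ f, 0 ≤ f → 0 ≤ P f) (hPnorm : ‖P‖ ≤ 1) (hμ : μ.comp P = μ) {g : C(X, ℂ)}
    (hg : 0 ≤ g) : μ.variation (P g) = μ.variation g := by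
  set C : C(X, ℂ) := algebraMap ℝ C(X, ℂ) ‖g‖
  have hC : ∀ x, ‖C x‖ = ‖g‖ := fun x => by simp [C]
  have hCg : 0 ≤ C - g := sub_nonneg.2 (IsSelfAdjoint.of_nonneg hg).le_algebraMap_norm_self
  have hle := μ.variation_comp_le P hP hg
  have hle' := μ.variation_comp_le P hP hCg
  rw [hμ] at hle hle'
  have hPC : μ.variation (P C) ≤ μ.variation C := μ.variation_mono fun x =>
    calc ‖P C x‖ ≤ 1 * ‖C‖ := ((P C).norm_coe_le_norm x).trans (P.le_of_opNorm_le hPnorm C)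
      _ ≤ ‖C x‖ := by rw [one_mul, hC]; exact (C.norm_le (norm_nonneg g)).2 fun x => (hC x).le
  have hsplit : μ.variation C = μ.variation g + μ.variation (C - g) := by
    rw [← μ.variation_add hg hCg, add_sub_cancel]
  have hsplitP : μ.variation (P C) = μ.variation (P g) + μ.variation (P (C - g)) := by
    rw [← μ.variation_add (hP g hg) (hP _ hCg), ← map_add, add_sub_cancel]
  linarith

end ContinuousLinearMap

end

/-- Riesz-representation formulation: complex Borel measures on a compact metric
space `X` are represented by continuous linear functionals `λ : C(X,ℂ) → ℂ`, the
adjoint action `P*λ` is `λ ∘ P`, and the total variation `|λ|` is characterized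
(on nonnegative continuous `g`) by `∫ g d|λ| = sup_{‖h‖ ≤ 1} |λ(g·h)|`.
If `P` is a positive operator on `C⁰(X)` of norm at most `1`, then
`|P*λ| ≤ P*|λ|`; in particular, if `P*λ = λ` then `P*|λ| = |λ|`. -/
theorem totalVariation_adjoint_le
    {X : Type*} [MetricSpace X] [CompactSpace X]
    (P : C(X, ℂ) →L[ℂ] C(X, ℂ))
    (hPpos : ∀ g : C(X, ℂ), (∀ x, 0 ≤ (g x).re ∧ (g x).im = 0) →
      ∀ x, 0 ≤ (P g x).re ∧ (P g x).im = 0)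
    (hPnorm : ‖P‖ ≤ 1)
    (lam : C(X, ℂ) →L[ℂ] ℂ)
    (V : (C(X, ℂ) →L[ℂ] ℂ) → C(X, ℂ) → ℝ)
    (hV : ∀ (μ : C(X, ℂ) →L[ℂ] ℂ) (g : C(X, ℂ)), (∀ x, 0 ≤ (g x).re ∧ (g x).im = 0) →
      IsLUB {r : ℝ | ∃ h : C(X, ℂ), ‖h‖ ≤ 1 ∧ r = ‖μ (g * h)‖} (V μ g)) :
    (∀ g : C(X, ℂ), (∀ x, 0 ≤ (g x).re ∧ (g x).im = 0) →
      V (lam.comp P) g ≤ V lam (P g)) ∧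
    (lam.comp P = lam → ∀ g : C(X, ℂ), (∀ x, 0 ≤ (g x).re ∧ (g x).im = 0) →
      V lam (P g) = V lam g) := by
  simp only [← ContinuousMap.nonneg_iff_forall_re_im] at hPpos hV ⊢
  have hV_eq : ∀ μ g, 0 ≤ g → V μ g = μ.variation g := fun μ g hg =>
    (hV μ g hg).unique (μ.isLUB_variation g)
  refine ⟨fun g hg => ?_, fun hinv g hg => ?_⟩
  · rw [hV_eq _ _ hg, hV_eq _ _ (hPpos g hg)]
    exact lam.variation_comp_le P hPpos hg
  · rw [hV_eq _ _ hg, hV_eq _ _ (hPpos g hg)]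
    exact lam.variation_apply_eq_of_comp_eq P hPpos hPnorm hinv hg
end

section
/- Let Φ be a connected graph (symmetric, irreflexive relation) and let L be the space of functions φ : Φ → ℂ such that, for every vertex p, φ is constant on the set of neighbors of p. If Φ is not bipartite (i.e., admits no partition {P, Q} such that every neighbor of a point of P lies in Q and vice versa), then L consists exactly of the constant functions. If Φ is partitioned by a bipartition {P, Q}, then L is spanned by the constant functions together with the function 1_P - 1_Q. -/
open scoped Classical

private lemma walkVal {V : Type*} {G : SimpleGraph V} {φ : V → ℂ}
    (hL : ∀ p q r, G.Adj p q → G.Adj p r → φ q = φ r)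
    {u v : V} (w : G.Walk u v) :
    (Even w.length → φ v = φ u) ∧ (∀ x, G.Adj u x → ¬ Even w.length → φ v = φ x) := by
  induction w with
  | nil => exact ⟨fun _ => rfl, fun x hx h => (h Even.zero).elim⟩
  | @cons a b c h w ih =>
    constructor
    · intro he
      rw [SimpleGraph.Walk.length_cons, Nat.even_add_one] at he
      exact ih.2 a h.symm he
    · intro x hx ho
      rw [SimpleGraph.Walk.length_cons, Nat.even_add_one, not_not] at ho
      rw [ih.1 ho]
      exact hL a b x h hx

private lemma walkParity {V : Type*} {G : SimpleGraph V} {P : Set V}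
    (hP : ∀ p q, G.Adj p q → (p ∈ P ↔ q ∉ P))
    {u v : V} (w : G.Walk u v) : ((u ∈ P) ↔ (v ∈ P)) ↔ Even w.length := by
  induction w with
  | nil => simp
  | @cons a b c h w ih =>
    rw [SimpleGraph.Walk.length_cons, Nat.even_add_one, ← ih]
    have := hP a b h
    tauto

/-- Let `Φ` be a connected graph and `L` the space of functions `φ : Φ → ℂ` that
are constant on the neighbors of every vertex. If `Φ` is not bipartite, then `L`
consists exactly of the constant functions. If `Φ` is bipartite with bipartition
`{P, Pᶜ}`, then `L` is spanned by the constants together with `1_P - 1_{Pᶜ}`. -/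
theorem constant_on_neighbors
    {V : Type*} (G : SimpleGraph V) (hconn : G.Connected) :
    ((¬ ∃ P : Set V, ∀ p q, G.Adj p q → (p ∈ P ↔ q ∉ P)) →
      ∀ φ : V → ℂ,
        ((∀ p q r, G.Adj p q → G.Adj p r → φ q = φ r) ↔ ∃ c : ℂ, ∀ v, φ v = c)) ∧
    (∀ P : Set V, (∀ p q, G.Adj p q → (p ∈ P ↔ q ∉ P)) →
      ∀ φ : V → ℂ,
        ((∀ p q r, G.Adj p q → G.Adj p r → φ q = φ r) ↔
          ∃ c d : ℂ, ∀ v, φ v = c + d * (if v ∈ P then 1 else -1))) := by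
  obtain ⟨v0⟩ := hconn.nonempty
  constructor
  · intro hnb φ
    constructor
    · intro hL
      by_cases hx : ∃ x, G.Adj v0 x
      · obtain ⟨x, hx⟩ := hx
        by_cases hab : φ v0 = φ x
        · refine ⟨φ v0, fun v => ?_⟩
          obtain ⟨w⟩ := hconn v0 v
          by_cases he : Even w.length
          · exact (walkVal hL w).1 he
          · exact ((walkVal hL w).2 x hx he).trans hab.symm
        · exfalso
          apply hnb
          refine ⟨{w | φ w = φ v0}, fun p q hpq => ?_⟩
          obtain ⟨w⟩ := hconn v0 p
          have h1 := walkVal hL w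
          have h2 := walkVal hL (w.concat hpq)
          rw [SimpleGraph.Walk.length_concat] at h2
          by_cases he : Even w.length
          · have hp : φ p = φ v0 := h1.1 he
            have ho : ¬ Even (w.length + 1) := by simpa [Nat.even_add_one] using he
            have hq' : φ q = φ x := h2.2 x hx ho
            simp only [Set.mem_setOf_eq, hp, hq']
            constructor
            · intro _ hxv; exact hab hxv.symm
            · intro _; trivial
          · have hp : φ p = φ x := h1.2 x hx he
            have hev : Even (w.length + 1) := by
              rw [Nat.even_add_one]; exact he
            have hq' : φ q = φ v0 := h2.1 hev
            simp only [Set.mem_setOf_eq, hp, hq']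
            constructor
            · intro hxv h; exact hab hxv.symm
            · intro h; exact (h trivial).elim
      · refine ⟨φ v0, fun v => ?_⟩
        obtain ⟨w⟩ := hconn v0 v
        cases w with
        | nil => rfl
        | cons h _ => exact ((hx ⟨_, h⟩).elim)
    · rintro ⟨c, hc⟩ p q r _ _
      rw [hc q, hc r]
  · intro P hP φ
    constructor
    · intro hL
      have key : ∀ u v : V, ((u ∈ P) ↔ (v ∈ P)) → φ u = φ v := by
        intro u v h
        obtain ⟨w⟩ := hconn u v
        exact ((walkVal hL w).1 ((walkParity hP w).mp h)).symm
      by_cases hPe : ∃ u, u ∈ P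
      · obtain ⟨u, hu⟩ := hPe
        by_cases hQe : ∃ v, v ∉ P
        · obtain ⟨v, hv⟩ := hQe
          refine ⟨(φ u + φ v)/2, (φ u - φ v)/2, fun w => ?_⟩
          by_cases hw : w ∈ P
          · rw [if_pos hw, key w u (by tauto)]; ring
          · rw [if_neg hw, key w v (by tauto)]; ring
        · push_neg at hQe
          exact ⟨φ v0, 0, fun w => by
            rw [if_pos (hQe w), key w v0 (by simp [hQe])]; ring⟩
      · push_neg at hPe
        exact ⟨φ v0, 0, fun w => by
          rw [if_neg (hPe w), key w v0 (by simp [hPe])]; ring⟩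
    · rintro ⟨c, d, hc⟩ p q r hpq hpr
      have h1 := hP p q hpq
      have h2 := hP p r hpr
      have h3 : (q ∈ P) ↔ (r ∈ P) := by tauto
      by_cases hq : q ∈ P
      · rw [hc q, hc r, if_pos hq, if_pos (h3.mp hq)]
      · rw [hc q, hc r, if_neg hq, if_neg (fun h => hq (h3.mpr h))]
end
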